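/- Let A ∈ ℝ^{m×n} and Ω ∈ ℝ^{n×s}, and set Y = AΩ and W = AᵀAΩ. Suppose Y = QR where Q ∈ ℝ^{m×s} has orthonormal columns and R ∈ ℝ^{s×s} is invertible. Then B := R^{-T} Wᵀ satisfies B = QᵀA, and consequently A − QB = (I − QQᵀ)A; moreover, if Ũ ∈ ℝ^{s×r} has orthonormal columns and Σ ∈ ℝ^{r×r}, V ∈ ℝ^{n×r} satisfy ŨᵀB = ΣVᵀ, then U = QŨ satisfies UᵀA = ΣVᵀ, so that A − UΣVᵀ = A − UUᵀA. -/

import Mathlib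

open MeasureTheory ProbabilityTheory Matrix
open scoped ENNReal

noncomputable section

namespace RSVD

instance (m n : ℕ) : MeasurableSpace (Matrix (Fin m) (Fin n) ℝ) :=
  inferInstanceAs (MeasurableSpace (Fin m → Fin n → ℝ))

/-- The law of an `m × n` random matrix with i.i.d. standard normal entries. -/
def stdGaussian (m n : ℕ) : Measure (Matrix (Fin m) (Fin n) ℝ) :=
  Measure.pi fun _ : Fin m => Measure.pi fun _ : Fin n => gaussianReal 0 1

/-- The Frobenius norm of a real matrix. -/
def frobNorm {m n : ℕ} (M : Matrix (Fin m) (Fin n) ℝ) : ℝ :=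
  Real.sqrt (∑ i, ∑ j, M i j ^ 2)

/-- The `i`-th largest singular value of `M` (indexing is 1-based); `0` out of range. -/
def singularValue {m n : ℕ} (M : Matrix (Fin m) (Fin n) ℝ) (i : ℕ) : ℝ :=
  if h : 1 ≤ i ∧ i ≤ n then
    Real.sqrt
      (((show (Mᵀ * M).IsHermitian by simpa using Matrix.isHermitian_conjTranspose_mul_self M).eigenvalues ∘
          Tuple.sort (show (Mᵀ * M).IsHermitian by simpa using Matrix.isHermitian_conjTranspose_mul_self M).eigenvalues)
        (Fin.rev ⟨i - 1, by omega⟩))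
  else 0

/-- The spectral norm (largest singular value). -/
def specNorm {m n : ℕ} (M : Matrix (Fin m) (Fin n) ℝ) : ℝ :=
  singularValue M 1

/-- The tail energy `τ_k(M) = (∑_{i ≥ k} σ_i(M)²)^{1/2}`. -/
def tailEnergy {m n : ℕ} (M : Matrix (Fin m) (Fin n) ℝ) (k : ℕ) : ℝ :=
  Real.sqrt (∑ i ∈ Finset.Icc k n, singularValue M i ^ 2)

/-- The Schatten-`p` norm, with `p = ∞` giving the spectral norm. -/
def schattenNorm {m n : ℕ} (M : Matrix (Fin m) (Fin n) ℝ) (p : ℝ≥0∞) : ℝ :=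
  if p = ∞ then specNorm M
  else (∑ i ∈ Finset.Icc 1 n, singularValue M i ^ p.toReal) ^ (1 / p.toReal)

/-- Moore–Penrose pseudoinverse of a full-row-rank matrix: `G† = Gᵀ (G Gᵀ)⁻¹`. -/
def pinvRow {a b : ℕ} (G : Matrix (Fin a) (Fin b) ℝ) : Matrix (Fin b) (Fin a) ℝ :=
  Gᵀ * (G * Gᵀ)⁻¹

/-- Moore–Penrose pseudoinverse of a full-column-rank matrix: `G† = (Gᵀ G)⁻¹ Gᵀ`. -/
def pinvCol {a b : ℕ} (G : Matrix (Fin a) (Fin b) ℝ) : Matrix (Fin b) (Fin a) ℝ :=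
  (Gᵀ * G)⁻¹ * Gᵀ

/-- The column space of a matrix, as a subspace of Euclidean space. -/
def colSpace {m k : ℕ} (M : Matrix (Fin m) (Fin k) ℝ) :
    Submodule ℝ (EuclideanSpace ℝ (Fin m)) :=
  LinearMap.range (Matrix.toEuclideanLin M)

/-- The matrix of the orthogonal projection onto the column space of `M`. -/
def projCol {m k : ℕ} (M : Matrix (Fin m) (Fin k) ℝ) : Matrix (Fin m) (Fin m) ℝ :=
  Matrix.toEuclideanLin.symm
    (((colSpace M).subtypeL.comp (Submodule.orthogonalProjectionOnto (colSpace M))).toLinearMap)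

section ProjectionIdentities

variable {ι κ σ τ α : Type*}

theorem transpose_gram_mul [Fintype ι] [Fintype κ] [CommSemiring α]
    (A : Matrix ι κ α) (Ω : Matrix κ σ α) :
    (Aᵀ * A * Ω)ᵀ = (A * Ω)ᵀ * A := by
  simp only [transpose_mul, transpose_transpose, Matrix.mul_assoc]

/-- The sketch `W = AᵀAΩ` yields `QᵀA` without a second pass over `A`. -/
theorem inv_transpose_mul_gram_transpose_eq [Fintype ι] [Fintype κ] [Fintype σ] [DecidableEq σ]
    [CommRing α]
    {A : Matrix ι κ α} {Ω : Matrix κ σ α} {Q : Matrix ι σ α} {R : Matrix σ σ α}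
    (hQR : A * Ω = Q * R) (hR : IsUnit R.det) :
    (R⁻¹)ᵀ * (Aᵀ * A * Ω)ᵀ = Qᵀ * A := by
  have hRinv : (R⁻¹)ᵀ * Rᵀ = 1 := by
    rw [← transpose_mul, mul_nonsing_inv R hR, transpose_one]
  rw [transpose_gram_mul, hQR, transpose_mul, ← Matrix.mul_assoc, ← Matrix.mul_assoc, hRinv,
    Matrix.one_mul]

theorem sub_mul_transpose_mul_eq_of_transpose_mul_eq [Fintype ι] [Fintype τ] [Ring α]
    {A : Matrix ι κ α} {U : Matrix ι τ α} {S : Matrix τ τ α} {V : Matrix κ τ α}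
    (hU : Uᵀ * A = S * Vᵀ) :
    A - U * S * Vᵀ = A - U * Uᵀ * A := by
  rw [Matrix.mul_assoc U Uᵀ A, hU, Matrix.mul_assoc]

end ProjectionIdentities

theorem statement18_general {m n s r : ℕ} (A : Matrix (Fin m) (Fin n) ℝ)
    (Ω : Matrix (Fin n) (Fin s) ℝ)
    (Q : Matrix (Fin m) (Fin s) ℝ) (R : Matrix (Fin s) (Fin s) ℝ)
    (hQR : A * Ω = Q * R) (hR : IsUnit R.det) :
    ((R⁻¹)ᵀ * (Aᵀ * A * Ω)ᵀ = Qᵀ * A ∧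
      A - Q * ((R⁻¹)ᵀ * (Aᵀ * A * Ω)ᵀ) = (1 - Q * Qᵀ) * A) ∧
    ∀ (Ut : Matrix (Fin s) (Fin r) ℝ) (Sig : Matrix (Fin r) (Fin r) ℝ)
        (V : Matrix (Fin n) (Fin r) ℝ), Utᵀ * Ut = 1 →
      Utᵀ * ((R⁻¹)ᵀ * (Aᵀ * A * Ω)ᵀ) = Sig * Vᵀ →
      (Q * Ut)ᵀ * A = Sig * Vᵀ ∧
      A - (Q * Ut) * Sig * Vᵀ = A - (Q * Ut) * (Q * Ut)ᵀ * A := by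
  have hB := inv_transpose_mul_gram_transpose_eq hQR hR
  refine ⟨⟨hB, by rw [hB, Matrix.sub_mul, Matrix.one_mul, Matrix.mul_assoc]⟩, ?_⟩
  intro Ut Sig V _ hSV
  have hU : (Q * Ut)ᵀ * A = Sig * Vᵀ := by
    rwa [transpose_mul, Matrix.mul_assoc, ← hB]
  exact ⟨hU, sub_mul_transpose_mul_eq_of_transpose_mul_eq hU⟩

/-- the one-pass RSVD implementation `B = R⁻ᵀ Wᵀ` with `W = Aᵀ A Ω` recovers
`B = Qᵀ A`, so the method is an orthogonal projection method. -/
theorem statement18 {m n s r : ℕ} (A : Matrix (Fin m) (Fin n) ℝ)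
    (Ω : Matrix (Fin n) (Fin s) ℝ)
    (Q : Matrix (Fin m) (Fin s) ℝ) (R : Matrix (Fin s) (Fin s) ℝ)
    (hQR : A * Ω = Q * R) (hQ : Qᵀ * Q = 1) (hR : IsUnit R.det) :
    ((R⁻¹)ᵀ * (Aᵀ * A * Ω)ᵀ = Qᵀ * A ∧
      A - Q * ((R⁻¹)ᵀ * (Aᵀ * A * Ω)ᵀ) = (1 - Q * Qᵀ) * A) ∧
    ∀ (Ut : Matrix (Fin s) (Fin r) ℝ) (Sig : Matrix (Fin r) (Fin r) ℝ)
        (V : Matrix (Fin n) (Fin r) ℝ), Utᵀ * Ut = 1 →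
      Utᵀ * ((R⁻¹)ᵀ * (Aᵀ * A * Ω)ᵀ) = Sig * Vᵀ →
      (Q * Ut)ᵀ * A = Sig * Vᵀ ∧
      A - (Q * Ut) * Sig * Vᵀ = A - (Q * Ut) * (Q * Ut)ᵀ * A :=
  statement18_general A Ω Q R hQR hR

end RSVD
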